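/- arXiv:1811.06853 — 7 statements merged into one kernel-verified Lean document; each statement's English description precedes it below -/
import Mathlib

section
/- Let (α_i, β_i, γ_i) and (α'_i, β'_i, γ'_i) (i = 1,2,3) be two triples of real numbers with α_i + β_i + γ_i = π and α'_i + β'_i + γ'_i = π for each i. Suppose both families produce the same values under the shaped 3–2 Pachner move formulas, i.e. β_2 + γ_1 = β'_2 + γ'_1, β_1 + γ_3 = β'_1 + γ'_3, β_3 + γ_2 = β'_3 + γ'_2, β_1 + γ_2 = β'_1 + γ'_2, β_3 + γ_1 = β'_3 + γ'_1, and β_2 + γ_3 = β'_2 + γ'_3. Then there exists a real number s such that for all i = 1,2,3: α'_i = α_i, β'_i = β_i + s, and γ'_i = γ_i − s; in particular the two families are gauge equivalent. -/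
open Real

/-! The differences `βᵢ' - βᵢ` and `γⱼ' - γⱼ` are linked in pairs by the move equations, which
form the hexagon `β₁ – γ₃ – β₂ – γ₁ – β₃ – γ₂ – β₁`. Walking five of its edges from
`s = β₁' - β₁` forces every `β`-difference to be `s` and every `γ`-difference to be `-s`; the
angle sums then leave each `α` unchanged. -/

theorem gauge_triple_of_add_add_eq {G : Type*} [AddCommGroup G] {α β γ α' β' γ' s : G}
    (hsum : α + β + γ = α' + β' + γ') (hβ : β' = β + s) (hγ : γ' = γ - s) :
    α' = α ∧ β' = β + s ∧ γ' = γ - s := by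
  refine ⟨?_, hβ, hγ⟩
  subst hβ hγ
  have hcancel : α' + (β + s) + (γ - s) = α' + (β + γ) := by abel
  rw [hcancel, add_assoc] at hsum
  exact (add_right_cancel hsum).symm

theorem pachner32_gauge_equivalence_general
    (α₁ α₂ α₃ β₁ β₂ β₃ γ₁ γ₂ γ₃ : ℝ)
    (α₁' α₂' α₃' β₁' β₂' β₃' γ₁' γ₂' γ₃' : ℝ)
    (h1 : α₁ + β₁ + γ₁ = π)
    (h2 : α₂ + β₂ + γ₂ = π)
    (h3 : α₃ + β₃ + γ₃ = π)
    (h1' : α₁' + β₁' + γ₁' = π)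
    (h2' : α₂' + β₂' + γ₂' = π)
    (h3' : α₃' + β₃' + γ₃' = π)
    (e1 : β₂ + γ₁ = β₂' + γ₁')
    (e2 : β₁ + γ₃ = β₁' + γ₃')
    (e3 : β₃ + γ₂ = β₃' + γ₂')
    (e5 : β₃ + γ₁ = β₃' + γ₁')
    (e6 : β₂ + γ₃ = β₂' + γ₃') :
    ∃ s : ℝ,
      (α₁' = α₁ ∧ β₁' = β₁ + s ∧ γ₁' = γ₁ - s) ∧
      (α₂' = α₂ ∧ β₂' = β₂ + s ∧ γ₂' = γ₂ - s) ∧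
      (α₃' = α₃ ∧ β₃' = β₃ + s ∧ γ₃' = γ₃ - s) := by
  set s := β₁' - β₁
  have hβ₁ : β₁' = β₁ + s := by ring
  have hγ₃ : γ₃' = γ₃ - s := by linarith
  have hβ₂ : β₂' = β₂ + s := by linarith
  have hγ₁ : γ₁' = γ₁ - s := by linarith
  have hβ₃ : β₃' = β₃ + s := by linarith
  have hγ₂ : γ₂' = γ₂ - s := by linarith
  exact ⟨s, gauge_triple_of_add_add_eq (h1.trans h1'.symm) hβ₁ hγ₁,
    gauge_triple_of_add_add_eq (h2.trans h2'.symm) hβ₂ hγ₂,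
    gauge_triple_of_add_add_eq (h3.trans h3'.symm) hβ₃ hγ₃⟩

/-- Two families of angle triples, each triple summing to `π`, that
produce the same angles under the shaped 3-2 Pachner move formulas are gauge
equivalent: there is `s ∈ ℝ` with `α'ᵢ = αᵢ`, `β'ᵢ = βᵢ + s`, `γ'ᵢ = γᵢ − s`
for `i = 1, 2, 3`. -/
theorem pachner32_gauge_equivalence
    (α₁ α₂ α₃ β₁ β₂ β₃ γ₁ γ₂ γ₃ : ℝ)
    (α₁' α₂' α₃' β₁' β₂' β₃' γ₁' γ₂' γ₃' : ℝ)
    (h1 : α₁ + β₁ + γ₁ = π)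
    (h2 : α₂ + β₂ + γ₂ = π)
    (h3 : α₃ + β₃ + γ₃ = π)
    (h1' : α₁' + β₁' + γ₁' = π)
    (h2' : α₂' + β₂' + γ₂' = π)
    (h3' : α₃' + β₃' + γ₃' = π)
    (e1 : β₂ + γ₁ = β₂' + γ₁')
    (e2 : β₁ + γ₃ = β₁' + γ₃')
    (e3 : β₃ + γ₂ = β₃' + γ₂')
    (e4 : β₁ + γ₂ = β₁' + γ₂')
    (e5 : β₃ + γ₁ = β₃' + γ₁')
    (e6 : β₂ + γ₃ = β₂' + γ₃') :
    ∃ s : ℝ,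
      (α₁' = α₁ ∧ β₁' = β₁ + s ∧ γ₁' = γ₁ - s) ∧
      (α₂' = α₂ ∧ β₂' = β₂ + s ∧ γ₂' = γ₂ - s) ∧
      (α₃' = α₃ ∧ β₃' = β₃ + s ∧ γ₃' = γ₃ - s) :=
  pachner32_gauge_equivalence_general α₁ α₂ α₃ β₁ β₂ β₃ γ₁ γ₂ γ₃ α₁' α₂' α₃' β₁' β₂' β₃' γ₁' γ₂' γ₃'
    h1 h2 h3 h1' h2' h3' e1 e2 e3 e5 e6
end

section
/- For every Schwartz function f : ℝ → ℂ, the Weil–Gel'fand–Zak transform Wf satisfies the quasi-periodicity relation Wf(x+m, y+n) = (−1)^{mn} e^{πi(nx − my)} Wf(x,y) for all (m,n) ∈ ℤ² and all (x,y) ∈ ℝ²; that is, Wf is a smooth section of the line bundle L over the torus Π = (ℝ/ℤ)² with multiplier φ((m,n),(x,y)) = (−1)^{mn} e^{πi(nx − my)}. -/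
open Complex

/-- The Weil–Gel'fand–Zak transform `Wf(x,y) = e^{πixy} Σ_{m∈ℤ} f(x+m) e^{2πimy}`. -/
noncomputable def wgz (f : ℝ → ℂ) : ℝ × ℝ → ℂ :=
  fun p =>
    Complex.exp (Real.pi * Complex.I * (p.1 : ℂ) * (p.2 : ℂ)) *
      ∑' m : ℤ, f (p.1 + m) * Complex.exp (2 * Real.pi * Complex.I * (m : ℂ) * (p.2 : ℂ))

/-!
Writing `Wf(x,y) = e^{πixy} Zf(x,y)` with the Zak sum `Zf(x,y) = Σₖ f(x+k) e^{2πiky}`, the sum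
`Zf` is `1`-periodic in `y` term by term, and shifting `x` by `m` is the reindexing
`k ↦ k - m`, which gives `Zf(x+m,y) = e^{-2πimy} Zf(x,y)`. Neither step needs summability
(`tsum` is invariant under equivalences of `ℤ`), so the relation holds for every `f : ℝ → ℂ`.
The multiplier then comes from `e^{πi(x+m)(y+n)} = e^{πimn} e^{πi(nx+my)} e^{πixy}`.
-/

section ZakSum

open scoped Real

noncomputable def zakSum (f : ℝ → ℂ) (x y : ℝ) : ℂ :=
  ∑' k : ℤ, f (x + k) * cexp (2 * π * I * k * y)

theorem wgz_eq_exp_mul_zakSum (f : ℝ → ℂ) (x y : ℝ) :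
    wgz f (x, y) = cexp (π * I * x * y) * zakSum f x y :=
  rfl

theorem zakSum_add_int_right (f : ℝ → ℂ) (x y : ℝ) (n : ℤ) :
    zakSum f x (y + n) = zakSum f x y := by
  refine tsum_congr fun k => congrArg (f (x + k) * ·) ?_
  have hshift : 2 * π * I * k * ((y + n : ℝ) : ℂ) =
      2 * π * I * k * y + (k * n : ℤ) * (2 * π * I) := by
    push_cast; ring
  rw [hshift, exp_add, exp_int_mul_two_pi_mul_I, mul_one]

theorem zakSum_add_int_left (f : ℝ → ℂ) (x y : ℝ) (m : ℤ) :
    zakSum f (x + m) y = cexp (-(2 * π * I * m * y)) * zakSum f x y := by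
  rw [zakSum, ← (Equiv.subRight m).tsum_eq, zakSum, ← tsum_mul_left]
  refine tsum_congr fun k => ?_
  have harg : x + m + ((k - m : ℤ) : ℝ) = x + k := by push_cast; ring
  have hphase : 2 * π * I * ((k - m : ℤ) : ℂ) * y =
      -(2 * π * I * m * y) + 2 * π * I * k * y := by
    push_cast; ring
  rw [Equiv.subRight_apply, harg, hphase, exp_add]
  ring

theorem wgz_add_int (f : ℝ → ℂ) (m n : ℤ) (x y : ℝ) :
    wgz f (x + m, y + n) =
      (-1 : ℂ) ^ (m * n) * cexp (π * I * (n * x - m * y)) * wgz f (x, y) := by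
  have hsign : (-1 : ℂ) ^ (m * n) = cexp ((m * n : ℤ) * (π * I)) := by
    rw [exp_int_mul, exp_pi_mul_I]
  rw [wgz_eq_exp_mul_zakSum, wgz_eq_exp_mul_zakSum, zakSum_add_int_right,
    zakSum_add_int_left, hsign]
  simp only [← mul_assoc, ← exp_add]
  congr 2
  push_cast
  ring

end ZakSum

/-- For a Schwartz function `f`, the WGZ transform satisfies the
quasi-periodicity `Wf(x+m, y+n) = (−1)^{mn} e^{πi(nx − my)} Wf(x,y)`, i.e. it is a
smooth section of the line bundle `L` over the torus `(ℝ/ℤ)²` with multiplier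
`φ((m,n),(x,y)) = (−1)^{mn} e^{πi(nx−my)}`. -/
theorem wgz_quasi_periodicity (f : SchwartzMap ℝ ℂ) :
    ∀ (m n : ℤ) (x y : ℝ),
      wgz f (x + m, y + n) =
        (-1 : ℂ) ^ (m * n) *
          Complex.exp (Real.pi * Complex.I * ((n : ℂ) * (x : ℂ) - (m : ℂ) * (y : ℂ))) *
          wgz f (x, y) :=
  wgz_add_int f
end

section
/- For every Schwartz function f : ℝ → ℂ and every x ∈ ℝ, one has ∫₀¹ Wf(x,y) e^{−πixy} dy = f(x); that is, the map g ↦ (x ↦ ∫₀¹ g(x,y) e^{−πixy} dy) is a left inverse of the Weil–Gel'fand–Zak transform W. -/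
/-! Multiplying `Wf(x,y)` by `e^{-πixy}` cancels the chirp factor and leaves the Fourier series
`Σ_m f(x+m) e^{2πimy}` in `y`, which converges absolutely since `f` decays faster than `|t|⁻²`.
Integrating it term by term over `[0,1]` kills every term but `m = 0`, which is `f x`. -/

open Complex

open MeasureTheory
open scoped Real
open scoped SchwartzMap

namespace SchwartzMap

variable {E : Type*} [NormedAddCommGroup E] [NormedSpace ℝ E]

theorem summable_norm_int (f : 𝓢(ℝ, E)) : Summable fun n : ℤ => ‖f n‖ :=
  summable_of_isBigO (Real.summable_abs_int_rpow one_lt_two)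
    ((f.isBigO_cocompact_rpow (-2)).comp_tendsto Int.tendsto_coe_cofinite).norm_left

theorem summable_norm_add_int (f : 𝓢(ℝ, E)) (x : ℝ) : Summable fun n : ℤ => ‖f (x + n)‖ := by
  simpa [sub_neg_eq_add, add_comm] using (compSubConstCLM ℝ (-x) f).summable_norm_int

end SchwartzMap

theorem norm_exp_two_pi_I_int_mul (n : ℤ) (y : ℝ) : ‖cexp (2 * π * I * n * y)‖ = 1 := by
  rw [norm_exp]
  simp [mul_re, mul_im]

theorem integral_exp_two_pi_I_int_mul (n : ℤ) :
    ∫ y in (0 : ℝ)..1, cexp (2 * π * I * n * y) = if n = 0 then 1 else 0 := by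
  split_ifs with hn
  · simp [hn]
  · have hc : 2 * π * I * n ≠ 0 := by simp [Real.pi_ne_zero, I_ne_zero, hn]
    rw [integral_exp_mul_complex hc, ofReal_one, mul_one, ofReal_zero, mul_zero, exp_zero,
      ← exp_int_mul_two_pi_mul_I n, mul_comm (n : ℂ), sub_self, zero_div]

theorem integral_tsum_mul_exp_two_pi_I_int_mul {c : ℤ → ℂ} (hc : Summable fun n => ‖c n‖) :
    ∫ y in (0 : ℝ)..1, ∑' n : ℤ, c n * cexp (2 * π * I * n * y) = c 0 := by
  have hint (n : ℤ) : Integrable (fun y : ℝ => c n * cexp (2 * π * I * n * y))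
      (volume.restrict (Set.Ioc 0 1)) :=
    Continuous.integrableOn_Ioc (by fun_prop)
  have hnorm : Summable fun n => ∫ y in Set.Ioc (0 : ℝ) 1, ‖c n * cexp (2 * π * I * n * y)‖ := by
    simpa [norm_exp_two_pi_I_int_mul] using hc
  rw [intervalIntegral.integral_of_le zero_le_one,
    ← integral_tsum_of_summable_integral_norm hint hnorm]
  simp_rw [← intervalIntegral.integral_of_le zero_le_one, intervalIntegral.integral_const_mul,
    integral_exp_two_pi_I_int_mul, mul_ite, mul_one, mul_zero]
  exact tsum_ite_eq 0 c

theorem wgz_mul_exp_neg (f : ℝ → ℂ) (x y : ℝ) :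
    wgz f (x, y) * cexp (-(π * I * x * y)) = ∑' m : ℤ, f (x + m) * cexp (2 * π * I * m * y) := by
  simp only [wgz]
  rw [mul_right_comm, ← exp_add, add_neg_cancel, exp_zero, one_mul]

/-- For every Schwartz function `f` and every `x ∈ ℝ`,
`∫₀¹ Wf(x,y) e^{−πixy} dy = f(x)`; that is,
`g ↦ (x ↦ ∫₀¹ g(x,y) e^{−πixy} dy)` is a left inverse of the WGZ transform. -/
theorem wgz_left_inverse (f : SchwartzMap ℝ ℂ) :
    ∀ x : ℝ,
      (∫ y in (0 : ℝ)..1,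
        wgz f (x, y) * Complex.exp (-(Real.pi * Complex.I * (x : ℂ) * (y : ℂ)))) = f x := by
  intro x
  simp_rw [wgz_mul_exp_neg]
  rw [integral_tsum_mul_exp_two_pi_I_int_mul (f.summable_norm_add_int x), Int.cast_zero, add_zero]
end

section
/- Let g₁ : ℝ² → ℂ satisfy g₁(x+m, y+n) = (−1)^{mn} e^{πi(nx − my)} g₁(x,y) for all (m,n) ∈ ℤ²; let g₂ : ℝ⁴ → ℂ satisfy g₂(s+m₁, t+n₁, x+m₂, y+n₂) = (−1)^{m₁n₁+m₂n₂} e^{πi(n₁s − m₁t + n₂x − m₂y)} g₂(s,t,x,y) for all (m₁,n₁,m₂,n₂) ∈ ℤ⁴; and let g₃ : ℝ⁴ → ℂ satisfy the conjugate relation g₃(s+m₁, t+n₁, x+m₂, y+n₂) = (−1)^{m₁n₁+m₂n₂} e^{−πi(n₁s − m₁t + n₂x − m₂y)} g₃(s,t,x,y). Define F̂(u,s,t,x,y) = (u, s+t+u−y), π̂₁(u,s,t,x,y) = (s+x, t+u, x+u, y−t−u), and π̂₂(u,s,t,x,y) = (s,t,x,y). Then the function p ↦ g₁(F̂(p)) ·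 g₂(π̂₁(p)) · g₃(π̂₂(p)) on ℝ⁵ is invariant under translation by every vector of ℤ⁵; that is, there is a natural isomorphism F*L ⊗ π̃₁*(L⊠L) ≅ π̃₂*(L⊠L) of line bundles over the torus (ℝ/ℤ)⁵. -/
/-!
Translating by `k ∈ ℤ⁵` shifts the three arguments by `F̂ k`, `π̂₁ k`, `π̂₂ k`, so the three
quasi-periodicity relations multiply the product by signs and phases. The signs cancel because their
exponents add up to `2 (k₁k₂ + k₂k₃ + k₄k₅)`. The phases cancel because, writing
`ω((m,n),(x,y)) = nx − my`, pulling back `ω` along `F̂` and `ω ⊕ ω` along `π̂₁` gives, added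
together, the pullback of `ω ⊕ ω` along `π̂₂`.
-/

open Complex
open scoped Real

theorem neg_one_zpow_mul_exp_mul_cancel {A B C : ℤ} {a b c : ℂ}
    (hsign : Even (A + B + C)) (hphase : a + b = c) (G₁ G₂ G₃ : ℂ) :
    (-1 : ℂ) ^ A * exp (π * I * a) * G₁ * ((-1 : ℂ) ^ B * exp (π * I * b) * G₂) *
        ((-1 : ℂ) ^ C * exp (-(π * I * c)) * G₃) =
      G₁ * G₂ * G₃ := by
  have hsigns : (-1 : ℂ) ^ A * (-1 : ℂ) ^ B * (-1 : ℂ) ^ C = 1 := by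
    rw [← zpow_add₀ (by norm_num), ← zpow_add₀ (by norm_num), hsign.neg_one_zpow]
  have hphases : exp (π * I * a) * exp (π * I * b) * exp (-(π * I * c)) = 1 := by
    rw [← exp_add, ← exp_add, ← hphase, ← exp_zero]
    congr 1
    ring
  linear_combination (exp (π * I * a) * exp (π * I * b) * exp (-(π * I * c)) * (G₁ * G₂ * G₃)) *
      hsigns + G₁ * G₂ * G₃ * hphases

/-- If `g₁` is quasi-periodic with multiplier
`φ((m,n),(x,y)) = (−1)^{mn} e^{πi(nx−my)}` (a section of `L`), `g₂` is doubly
quasi-periodic (a section of `L⊠L`), and `g₃` satisfies the conjugate relation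
(a section of `L*⊠L*`), then the product
`p ↦ g₁(F̂(p)) · g₂(π̂₁(p)) · g₃(π̂₂(p))` on `ℝ⁵`, where
`F̂(u,s,t,x,y) = (u, s+t+u−y)`, `π̂₁(u,s,t,x,y) = (s+x, t+u, x+u, y−t−u)`, and
`π̂₂(u,s,t,x,y) = (s,t,x,y)`, is invariant under translations by `ℤ⁵`; that is,
`F*L ⊗ π̃₁*(L⊠L) ≅ π̃₂*(L⊠L)` over the torus `(ℝ/ℤ)⁵`. -/
theorem line_bundle_isomorphism_over_five_torus
    (g₁ : ℝ → ℝ → ℂ) (g₂ g₃ : ℝ → ℝ → ℝ → ℝ → ℂ)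
    (h₁ : ∀ (m n : ℤ) (x y : ℝ),
      g₁ (x + m) (y + n) =
        (-1 : ℂ) ^ (m * n) *
          Complex.exp (Real.pi * Complex.I * ((n : ℂ) * (x : ℂ) - (m : ℂ) * (y : ℂ))) *
          g₁ x y)
    (h₂ : ∀ (m₁ n₁ m₂ n₂ : ℤ) (s t x y : ℝ),
      g₂ (s + m₁) (t + n₁) (x + m₂) (y + n₂) =
        (-1 : ℂ) ^ (m₁ * n₁ + m₂ * n₂) *
          Complex.exp (Real.pi * Complex.I *
            ((n₁ : ℂ) * (s : ℂ) - (m₁ : ℂ) * (t : ℂ) +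
             (n₂ : ℂ) * (x : ℂ) - (m₂ : ℂ) * (y : ℂ))) *
          g₂ s t x y)
    (h₃ : ∀ (m₁ n₁ m₂ n₂ : ℤ) (s t x y : ℝ),
      g₃ (s + m₁) (t + n₁) (x + m₂) (y + n₂) =
        (-1 : ℂ) ^ (m₁ * n₁ + m₂ * n₂) *
          Complex.exp (-(Real.pi * Complex.I *
            ((n₁ : ℂ) * (s : ℂ) - (m₁ : ℂ) * (t : ℂ) +
             (n₂ : ℂ) * (x : ℂ) - (m₂ : ℂ) * (y : ℂ)))) *
          g₃ s t x y) :
    ∀ (k₁ k₂ k₃ k₄ k₅ : ℤ) (u s t x y : ℝ),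
      g₁ (u + k₁) ((s + k₂) + (t + k₃) + (u + k₁) - (y + k₅)) *
        g₂ ((s + k₂) + (x + k₄)) ((t + k₃) + (u + k₁)) ((x + k₄) + (u + k₁))
          ((y + k₅) - (t + k₃) - (u + k₁)) *
        g₃ (s + k₂) (t + k₃) (x + k₄) (y + k₅) =
      g₁ u (s + t + u - y) *
        g₂ (s + x) (t + u) (x + u) (y - t - u) *
        g₃ s t x y := by
  intro k₁ k₂ k₃ k₄ k₅ u s t x y
  have hF : (s + k₂) + (t + k₃) + (u + k₁) - (y + k₅) =
      (s + t + u - y) + ((k₂ + k₃ + k₁ - k₅ : ℤ) : ℝ) := by push_cast; ring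
  have hπ₁₁ : (s + k₂) + (x + k₄) = (s + x) + ((k₂ + k₄ : ℤ) : ℝ) := by push_cast; ring
  have hπ₁₂ : (t + k₃) + (u + k₁) = (t + u) + ((k₃ + k₁ : ℤ) : ℝ) := by push_cast; ring
  have hπ₁₃ : (x + k₄) + (u + k₁) = (x + u) + ((k₄ + k₁ : ℤ) : ℝ) := by push_cast; ring
  have hπ₁₄ : (y + k₅) - (t + k₃) - (u + k₁) = (y - t - u) + ((k₅ - k₃ - k₁ : ℤ) : ℝ) := by
    push_cast; ring
  rw [hF, hπ₁₁, hπ₁₂, hπ₁₃, hπ₁₄, h₁, h₂, h₃]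
  refine neg_one_zpow_mul_exp_mul_cancel ⟨k₁ * k₂ + k₂ * k₃ + k₄ * k₅, by ring⟩ ?_ _ _ _
  push_cast
  ring
end

section
/- Let g₁ : ℝ² → ℂ satisfy g₁(x+m, y+n) = (−1)^{mn} e^{πi(nx − my)} g₁(x,y) for all (m,n) ∈ ℤ²; let g₂ : ℝ⁴ → ℂ satisfy g₂(s+m₁, t+n₁, x+m₂, y+n₂) = (−1)^{m₁n₁+m₂n₂} e^{πi(n₁s − m₁t + n₂x − m₂y)} g₂(s,t,x,y) for all (m₁,n₁,m₂,n₂) ∈ ℤ⁴; and let g₃ : ℝ⁴ → ℂ satisfy the conjugate relation g₃(s+m₁, t+n₁, x+m₂, y+n₂) = (−1)^{m₁n₁+m₂n₂} e^{−πi(n₁s − m₁t + n₂x − m₂y)} g₃(s,t,x,y). With E(x₀₁,…,x₂₃) = (x₀₂+x₁₃−x₀₃−x₁₂, x₀₂+x₁₃−x₀₁−x₂₃), π₁(x₀₁,…,x₂₃) = (x₀₃−x₂₃, x₀₂−x₀₃, x₀₂−x₁₂, x₀₁−x₀₂), and π₂(x₀₁,…,x₂₃) = (x₁₃−x₂₃,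 x₁₂−x₁₃, x₀₃−x₁₃, x₀₁−x₀₃), the function x ↦ g₁(E(x)) · g₂(π₁(x)) · g₃(π₂(x)) on ℝ⁶ is invariant under translation by every vector of ℤ⁶, hence descends to a function on the torus (ℝ/ℤ)⁶. -/
open Complex

/-!
Since `E`, `π₁`, `π₂` are linear with integer coefficients, translating `x` by `k ∈ ℤ⁶` translates
their values by the integer vectors `E k`, `π₁ k`, `π₂ k`, so each factor picks up its multiplier.
The product of the three multipliers is `1`: the exponents of `-1` add up to an even number, and
the phases cancel because `ω(E k, E x) + ω(π₁ k, π₁ x) = ω(π₂ k, π₂ x)` for the pairing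
`ω((m, n), (x, y)) = n x - m y` appearing in the multiplier.
-/

theorem mul_mul_eq_of_multipliers_mul_eq_one {M : Type*} [CommMonoid M] {A B C a b c α β γ : M}
    (hA : A = α * a) (hB : B = β * b) (hC : C = γ * c) (h : α * β * γ = 1) :
    A * B * C = a * b * c := by
  subst hA hB hC
  calc α * a * (β * b) * (γ * c) = α * β * γ * (a * b * c) := by ac_rfl
    _ = a * b * c := by rw [h, one_mul]

theorem neg_one_zpow_mul_exp_mul_mul_eq_one {a b c : ℤ} {u v w : ℂ} (hev : Even (a + b + c))
    (hsum : u + v + w = 0) :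
    (-1 : ℂ) ^ a * exp u * ((-1) ^ b * exp v) * ((-1) ^ c * exp w) = 1 :=
  calc (-1 : ℂ) ^ a * exp u * ((-1) ^ b * exp v) * ((-1) ^ c * exp w)
      = (-1) ^ (a + b + c) * exp (u + v + w) := by
        rw [zpow_add₀ (by norm_num), zpow_add₀ (by norm_num), exp_add, exp_add]; ring
    _ = 1 := by rw [hev.neg_one_zpow, hsum, exp_zero, one_mul]

theorem edge_face_sign_exponent_even (k01 k02 k03 k12 k13 k23 : ℤ) :
    Even ((k02 + k13 - k03 - k12) * (k02 + k13 - k01 - k23) +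
      ((k03 - k23) * (k02 - k03) + (k02 - k12) * (k01 - k02)) +
      ((k13 - k23) * (k12 - k13) + (k03 - k13) * (k01 - k03))) :=
  ⟨k02 * k13 - k02 * k23 - k01 * k13 + k01 * k03 + k03 * k23 - k03 * k03, by ring⟩

/-- If `g₁` is quasi-periodic with multiplier
`φ((m,n),(x,y)) = (−1)^{mn} e^{πi(nx−my)}` (a section of `L`), `g₂` is doubly
quasi-periodic (a section of `L⊠L`), and `g₃` satisfies the conjugate relation
(a section of `L*⊠L*`), then with
`E(x) = (x₀₂+x₁₃−x₀₃−x₁₂, x₀₂+x₁₃−x₀₁−x₂₃)`,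
`π₁(x) = (x₀₃−x₂₃, x₀₂−x₀₃, x₀₂−x₁₂, x₀₁−x₀₂)`, and
`π₂(x) = (x₁₃−x₂₃, x₁₂−x₁₃, x₀₃−x₁₃, x₀₁−x₀₃)`,
the function `x ↦ g₁(E(x)) · g₂(π₁(x)) · g₃(π₂(x))` on `ℝ⁶` is invariant under
translation by every vector of `ℤ⁶`, hence descends to the torus `(ℝ/ℤ)⁶`. -/
theorem edge_face_integrand_periodic
    (g₁ : ℝ → ℝ → ℂ) (g₂ g₃ : ℝ → ℝ → ℝ → ℝ → ℂ)
    (h₁ : ∀ (m n : ℤ) (x y : ℝ),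
      g₁ (x + m) (y + n) =
        (-1 : ℂ) ^ (m * n) *
          Complex.exp (Real.pi * Complex.I * ((n : ℂ) * (x : ℂ) - (m : ℂ) * (y : ℂ))) *
          g₁ x y)
    (h₂ : ∀ (m₁ n₁ m₂ n₂ : ℤ) (s t x y : ℝ),
      g₂ (s + m₁) (t + n₁) (x + m₂) (y + n₂) =
        (-1 : ℂ) ^ (m₁ * n₁ + m₂ * n₂) *
          Complex.exp (Real.pi * Complex.I *
            ((n₁ : ℂ) * (s : ℂ) - (m₁ : ℂ) * (t : ℂ) +
             (n₂ : ℂ) * (x : ℂ) - (m₂ : ℂ) * (y : ℂ))) *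
          g₂ s t x y)
    (h₃ : ∀ (m₁ n₁ m₂ n₂ : ℤ) (s t x y : ℝ),
      g₃ (s + m₁) (t + n₁) (x + m₂) (y + n₂) =
        (-1 : ℂ) ^ (m₁ * n₁ + m₂ * n₂) *
          Complex.exp (-(Real.pi * Complex.I *
            ((n₁ : ℂ) * (s : ℂ) - (m₁ : ℂ) * (t : ℂ) +
             (n₂ : ℂ) * (x : ℂ) - (m₂ : ℂ) * (y : ℂ)))) *
          g₃ s t x y) :
    ∀ (k01 k02 k03 k12 k13 k23 : ℤ) (x01 x02 x03 x12 x13 x23 : ℝ),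
      g₁ ((x02 + k02) + (x13 + k13) - (x03 + k03) - (x12 + k12))
          ((x02 + k02) + (x13 + k13) - (x01 + k01) - (x23 + k23)) *
        g₂ ((x03 + k03) - (x23 + k23)) ((x02 + k02) - (x03 + k03))
          ((x02 + k02) - (x12 + k12)) ((x01 + k01) - (x02 + k02)) *
        g₃ ((x13 + k13) - (x23 + k23)) ((x12 + k12) - (x13 + k13))
          ((x03 + k03) - (x13 + k13)) ((x01 + k01) - (x03 + k03)) =
      g₁ (x02 + x13 - x03 - x12) (x02 + x13 - x01 - x23) *
        g₂ (x03 - x23) (x02 - x03) (x02 - x12) (x01 - x02) *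
        g₃ (x13 - x23) (x12 - x13) (x03 - x13) (x01 - x03) := by
  intro k01 k02 k03 k12 k13 k23 x01 x02 x03 x12 x13 x23
  refine mul_mul_eq_of_multipliers_mul_eq_one
    ((by congr 1 <;> push_cast <;> ring : g₁ _ _ = _).trans
      (h₁ (k02 + k13 - k03 - k12) (k02 + k13 - k01 - k23) _ _))
    ((by congr 1 <;> push_cast <;> ring : g₂ _ _ _ _ = _).trans
      (h₂ (k03 - k23) (k02 - k03) (k02 - k12) (k01 - k02) _ _ _ _))
    ((by congr 1 <;> push_cast <;> ring : g₃ _ _ _ _ = _).trans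
      (h₃ (k13 - k23) (k12 - k13) (k03 - k13) (k01 - k03) _ _ _ _))
    (neg_one_zpow_mul_exp_mul_mul_eq_one
      (edge_face_sign_exponent_even k01 k02 k03 k12 k13 k23) ?_)
  push_cast
  ring
end

section
/- For every Schwartz function f : ℝ → ℂ, the map sending a Schwartz function φ : ℝ⁴ → ℂ to the absolutely convergent integral ∫_{ℝ³} f(x₃−x₂) e^{2πi x₀(x₃−x₂)} φ(x₀, x₀+x₂, x₂, x₃) dx₀ dx₂ dx₃ is a well-defined continuous linear functional on the Schwartz space 𝓢(ℝ⁴); that is, H(f)(x₀,x₁,x₂,x₃) = δ(x₀+x₂−x₁) f(x₃−x₂) e^{2πi x₀(x₃−x₂)} defines a tempered distribution on ℝ⁴. -/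
open Complex MeasureTheory Real

noncomputable section


private lemma htg_mul' {E : Type*} [NormedAddCommGroup E] [NormedSpace ℝ E]
    {A : Type*} [NormedRing A] [NormedAlgebra ℝ A] {f g : E → A}
    (hf : Function.HasTemperateGrowth f) (hg : Function.HasTemperateGrowth g) :
    Function.HasTemperateGrowth (fun x => f x * g x) := by
  refine ⟨hf.1.mul hg.1, fun n => ?_⟩
  obtain ⟨k₁, C₁, hC₁, h₁⟩ := hf.norm_iteratedFDeriv_le_uniform n
  obtain ⟨k₂, C₂, hC₂, h₂⟩ := hg.norm_iteratedFDeriv_le_uniform n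
  refine ⟨k₁ + k₂, 2 ^ n * (C₁ * C₂), fun x => ?_⟩
  have h1x : (0:ℝ) < 1 + ‖x‖ := by positivity
  calc ‖iteratedFDeriv ℝ n (fun y => f y * g y) x‖
      ≤ ∑ i ∈ Finset.range (n+1), (n.choose i : ℝ) * ‖iteratedFDeriv ℝ i f x‖
          * ‖iteratedFDeriv ℝ (n - i) g x‖ :=
        norm_iteratedFDeriv_mul_le hf.1 hg.1 x (by exact_mod_cast le_top)
    _ ≤ ∑ i ∈ Finset.range (n+1), (n.choose i : ℝ) * (C₁ * C₂ * (1+‖x‖)^(k₁+k₂)) := by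
        refine Finset.sum_le_sum fun i hi => ?_
        have ha := h₁ i (Nat.lt_succ_iff.mp (Finset.mem_range.mp hi)) x
        have hb := h₂ (n - i) (Nat.sub_le n i) x
        calc (n.choose i : ℝ) * ‖iteratedFDeriv ℝ i f x‖ * ‖iteratedFDeriv ℝ (n - i) g x‖
            ≤ (n.choose i : ℝ) * (C₁ * (1+‖x‖)^k₁) * (C₂*(1+‖x‖)^k₂) := by
              refine mul_le_mul (mul_le_mul le_rfl ha (norm_nonneg _) (by positivity)) hb
                (norm_nonneg _) (by positivity)
          _ = (n.choose i : ℝ) * (C₁ * C₂ * (1+‖x‖)^(k₁+k₂)) := by rw [pow_add]; ring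
    _ = (∑ i ∈ Finset.range (n+1), (n.choose i : ℝ)) * (C₁ * C₂ * (1+‖x‖)^(k₁+k₂)) := by
        rw [Finset.sum_mul]
    _ = 2^n * (C₁*C₂) * (1+‖x‖)^(k₁+k₂) := by
        rw [← Nat.cast_sum, Nat.sum_range_choose]; push_cast; ring

private lemma htg_comp_clm' {E F G : Type*} [NormedAddCommGroup E] [NormedSpace ℝ E]
    [NormedAddCommGroup F] [NormedSpace ℝ F] [NormedAddCommGroup G] [NormedSpace ℝ G]
    {f : F → G} (hf : Function.HasTemperateGrowth f) (ℓ : E →L[ℝ] F) :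
    Function.HasTemperateGrowth (fun x => f (ℓ x)) := by
  refine ⟨hf.1.comp ℓ.contDiff, fun n => ?_⟩
  obtain ⟨k, C, hC, h⟩ := hf.norm_iteratedFDeriv_le_uniform n
  refine ⟨k, C * ‖ℓ‖ ^ n * (1 + ‖ℓ‖) ^ k, fun x => ?_⟩
  have hcomp : iteratedFDeriv ℝ n (f ∘ ℓ) x
      = (iteratedFDeriv ℝ n f (ℓ x)).compContinuousLinearMap fun _ => ℓ :=
    ℓ.iteratedFDeriv_comp_right (hf.1.of_le (by exact_mod_cast le_top)) x le_rfl
  have : (fun x => f (ℓ x)) = f ∘ ℓ := rfl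
  rw [this, hcomp]
  calc ‖(iteratedFDeriv ℝ n f (ℓ x)).compContinuousLinearMap fun _ => ℓ‖
      ≤ ‖iteratedFDeriv ℝ n f (ℓ x)‖ * ∏ _i : Fin n, ‖ℓ‖ :=
        ContinuousMultilinearMap.norm_compContinuousLinearMap_le _ _
    _ = ‖iteratedFDeriv ℝ n f (ℓ x)‖ * ‖ℓ‖ ^ n := by simp
    _ ≤ (C * (1 + ‖ℓ x‖)^k) * ‖ℓ‖ ^ n := by
        gcongr; exact h n le_rfl (ℓ x)
    _ ≤ (C * ((1 + ‖ℓ‖) * (1 + ‖x‖))^k) * ‖ℓ‖ ^ n := by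
        gcongr
        have := ℓ.le_opNorm x
        nlinarith [norm_nonneg ℓ, norm_nonneg x, norm_nonneg (ℓ x)]
    _ = C * ‖ℓ‖ ^ n * (1 + ‖ℓ‖) ^ k * (1 + ‖x‖) ^ k := by rw [mul_pow]; ring

private lemma htg_schwartz' {E F : Type*} [NormedAddCommGroup E] [NormedSpace ℝ E]
    [NormedAddCommGroup F] [NormedSpace ℝ F] (f : SchwartzMap E F) :
    Function.HasTemperateGrowth (fun x => f x) := by
  refine ⟨f.smooth', fun n => ⟨0, SchwartzMap.seminorm ℝ 0 n f, fun x => ?_⟩⟩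
  simpa using f.norm_iteratedFDeriv_le_seminorm ℝ n x


private lemma charDeriv' (t : ℝ) :
    HasDerivAt (fun s : ℝ => Complex.exp (2*π*Complex.I*s))
      (2*π*Complex.I * Complex.exp (2*π*Complex.I*t)) t := by
  have h : HasDerivAt (fun s : ℝ => ((2*π*Complex.I) * (s:ℂ))) (2*π*Complex.I) t := by
    simpa using (Complex.ofRealCLM.hasDerivAt (x := t)).const_mul (2*π*Complex.I)
  simpa [mul_comm] using h.cexp

private lemma charIter' (n : ℕ) : iteratedDeriv n (fun s : ℝ => Complex.exp (2*π*Complex.I*s))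
    = fun s : ℝ => (2*π*Complex.I)^n * Complex.exp (2*π*Complex.I*(s:ℂ)) := by
  induction n with
  | zero => simp
  | succ n ih =>
    rw [iteratedDeriv_succ, ih]
    funext t
    rw [deriv_const_mul _ (charDeriv' t).differentiableAt, (charDeriv' t).deriv, pow_succ]
    ring

private lemma char_norm (t : ℝ) : ‖Complex.exp (2*π*Complex.I*t)‖ = 1 := by
  rw [Complex.norm_exp]
  norm_num [Complex.mul_re]

private lemma char_deriv_bound (n : ℕ) : ∀ i ≤ n, ∀ t : ℝ,
    ‖iteratedFDeriv ℝ i (fun s : ℝ => Complex.exp (2*π*Complex.I*s)) t‖ ≤ (1+2*π)^n := by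
  intro i hi t
  rw [norm_iteratedFDeriv_eq_norm_iteratedDeriv, charIter']
  have : ‖(2*π*Complex.I)^i * Complex.exp (2*π*Complex.I*t)‖ = (2*π)^i := by
    rw [norm_mul, norm_pow, char_norm, mul_one]
    norm_num [map_mul, Complex.norm_I, Complex.norm_real, Real.norm_eq_abs,
      _root_.abs_of_nonneg pi_nonneg]
  rw [this]
  calc (2*π)^i ≤ (1+2*π)^i := by gcongr; linarith [pi_nonneg]
    _ ≤ (1+2*π)^n := by
        apply pow_le_pow_right₀ (by linarith [pi_nonneg]) hi

private lemma char_smooth : ContDiff ℝ ((⊤ : ℕ∞) : WithTop ℕ∞) (fun s : ℝ => Complex.exp (2*π*Complex.I*(s:ℂ))) :=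
  (contDiff_const.mul Complex.ofRealCLM.contDiff).cexp

private lemma htg_comp_char {E : Type*} [NormedAddCommGroup E] [NormedSpace ℝ E]
    {Q : E → ℝ} (hQ : Function.HasTemperateGrowth Q) :
    Function.HasTemperateGrowth (fun x => Complex.exp (2*π*Complex.I*(Q x : ℂ))) := by
  have hcomp : (fun x => Complex.exp (2*π*Complex.I*(Q x : ℂ)))
      = (fun s : ℝ => Complex.exp (2*π*Complex.I*(s:ℂ))) ∘ Q := rfl
  refine ⟨?_, fun n => ?_⟩
  · rw [hcomp]; exact char_smooth.comp hQ.1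
  obtain ⟨k, C, hC, hQn⟩ := hQ.norm_iteratedFDeriv_le_uniform n
  refine ⟨k * n, n.factorial * (1+2*π)^n * (1+C)^n, fun x => ?_⟩
  have h1x : (0:ℝ) < 1 + ‖x‖ := by positivity
  have hD1 : (1:ℝ) ≤ 1 + C * (1+‖x‖)^k := by nlinarith [pow_pos h1x k]
  have key : ‖iteratedFDeriv ℝ n ((fun s : ℝ => Complex.exp (2*π*Complex.I*(s:ℂ))) ∘ Q) x‖
      ≤ n.factorial * (1+2*π)^n * (1 + C * (1+‖x‖)^k)^n := by
    apply norm_iteratedFDeriv_comp_le char_smooth hQ.1 (by exact_mod_cast le_top) x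
      (char_deriv_bound n · · (Q x))
    intro i hi1 hin
    calc ‖iteratedFDeriv ℝ i Q x‖ ≤ C * (1+‖x‖)^k := hQn i hin x
      _ ≤ 1 + C * (1+‖x‖)^k := by linarith
      _ ≤ (1 + C * (1+‖x‖)^k)^i := le_self_pow₀ hD1 (by omega)
  rw [hcomp]
  refine key.trans ?_
  have h2 : (1 + C * (1+‖x‖)^k) ≤ (1+C) * (1+‖x‖)^k := by
    have : (1:ℝ) ≤ (1+‖x‖)^k := one_le_pow₀ (by linarith [norm_nonneg x])
    nlinarith
  calc (n.factorial : ℝ) * (1+2*π)^n * (1 + C * (1+‖x‖)^k)^n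
      ≤ n.factorial * (1+2*π)^n * ((1+C) * (1+‖x‖)^k)^n := by
        gcongr <;> linarith [hD1]
    _ = n.factorial * (1+2*π)^n * (1+C)^n * (1+‖x‖)^(k*n) := by
        rw [mul_pow, ← pow_mul]; ring

instance volHaar3 : (volume : Measure (ℝ × ℝ × ℝ)).IsAddHaarMeasure :=
  Measure.prod.instIsAddHaarMeasure _ _

/-- For a Schwartz function `f : ℝ → ℂ`, the formula
`H(f)(x₀,x₁,x₂,x₃) = δ(x₀+x₂−x₁) f(x₃−x₂) e^{2πi x₀(x₃−x₂)}` defines a tempered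
distribution on `ℝ⁴`: for every Schwartz test function `φ` the integral (obtained by
setting `x₁ = x₀+x₂` and integrating over `(x₀,x₂,x₃) ∈ ℝ³`) converges absolutely,
and the resulting functional is a continuous linear map `𝓢(ℝ⁴) → ℂ`. -/
theorem tetrahedral_distribution_tempered (f : SchwartzMap ℝ ℂ) :
    (∀ φ : SchwartzMap (ℝ × ℝ × ℝ × ℝ) ℂ,
      Integrable (fun p : ℝ × ℝ × ℝ =>
        f (p.2.2 - p.2.1) *
          Complex.exp (2 * Real.pi * Complex.I * (p.1 : ℂ) * ((p.2.2 : ℂ) - (p.2.1 : ℂ))) *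
          φ (p.1, p.1 + p.2.1, p.2.1, p.2.2))) ∧
    ∃ L : SchwartzMap (ℝ × ℝ × ℝ × ℝ) ℂ →L[ℂ] ℂ,
      ∀ φ : SchwartzMap (ℝ × ℝ × ℝ × ℝ) ℂ,
        L φ = ∫ p : ℝ × ℝ × ℝ,
          f (p.2.2 - p.2.1) *
            Complex.exp (2 * Real.pi * Complex.I * (p.1 : ℂ) * ((p.2.2 : ℂ) - (p.2.1 : ℂ))) *
            φ (p.1, p.1 + p.2.1, p.2.1, p.2.2) := by
  classical
  -- linear maps
  set ℓ0 : (ℝ × ℝ × ℝ) →L[ℝ] ℝ := ContinuousLinearMap.fst ℝ ℝ (ℝ × ℝ) with hℓ0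
  set ℓ21 : (ℝ × ℝ × ℝ) →L[ℝ] ℝ :=
    (ContinuousLinearMap.fst ℝ ℝ ℝ).comp (ContinuousLinearMap.snd ℝ ℝ (ℝ × ℝ)) with hℓ21
  set ℓ22 : (ℝ × ℝ × ℝ) →L[ℝ] ℝ :=
    (ContinuousLinearMap.snd ℝ ℝ ℝ).comp (ContinuousLinearMap.snd ℝ ℝ (ℝ × ℝ)) with hℓ22
  set ℓy : (ℝ × ℝ × ℝ) →L[ℝ] ℝ := ℓ22 - ℓ21 with hℓy
  set T : (ℝ × ℝ × ℝ) →L[ℝ] (ℝ × ℝ × ℝ × ℝ) :=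
    ℓ0.prod ((ℓ0 + ℓ21).prod (ℓ21.prod ℓ22)) with hT
  have hTp : ∀ p : ℝ × ℝ × ℝ, T p = (p.1, p.1 + p.2.1, p.2.1, p.2.2) := fun p => rfl
  -- the multiplier function
  set g : (ℝ × ℝ × ℝ) → ℂ := fun p =>
    f (p.2.2 - p.2.1) *
      Complex.exp (2 * Real.pi * Complex.I * (p.1 : ℂ) * ((p.2.2 : ℂ) - (p.2.1 : ℂ))) with hgdef
  have hg : Function.HasTemperateGrowth g := by
    have heq : g = fun p => (fun x => f (ℓy p)) p *
        Complex.exp (2*π*Complex.I*((ℓ0 p * ℓy p : ℝ) : ℂ)) := by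
      funext p
      simp only [hgdef, hℓy, hℓ0, hℓ21, hℓ22, ContinuousLinearMap.sub_apply,
        ContinuousLinearMap.coe_fst', ContinuousLinearMap.coe_comp',
        ContinuousLinearMap.coe_snd', Function.comp_apply]
      congr 1
      push_cast
      ring_nf
    rw [heq]
    exact htg_mul' (htg_comp_clm' (htg_schwartz' f) ℓy)
      (htg_comp_char (htg_mul' ℓ0.hasTemperateGrowth ℓy.hasTemperateGrowth))
  -- Schwartz-space continuous linear maps
  have hupper : ∃ (k : ℕ) (C : ℝ), ∀ p : ℝ × ℝ × ℝ, ‖p‖ ≤ C * (1 + ‖T p‖) ^ k := by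
    refine ⟨1, 1, fun p => ?_⟩
    have h1 : ‖p‖ ≤ ‖T p‖ := by
      rw [hTp p]
      simp only [Prod.norm_def]
      exact max_le_max le_rfl (le_max_right _ _)
    have := norm_nonneg (T p)
    simpa using h1.trans (by linarith)
  set compT : SchwartzMap (ℝ × ℝ × ℝ × ℝ) ℂ →L[ℝ] SchwartzMap (ℝ × ℝ × ℝ) ℂ :=
    SchwartzMap.compCLM ℝ T.hasTemperateGrowth hupper with hcompT
  set mulG : SchwartzMap (ℝ × ℝ × ℝ) ℂ →L[ℝ] SchwartzMap (ℝ × ℝ × ℝ) ℂ :=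
    SchwartzMap.bilinLeftCLM (ContinuousLinearMap.mul ℝ ℂ) hg with hmulG
  set intC : SchwartzMap (ℝ × ℝ × ℝ) ℂ →L[ℝ] ℂ :=
    SchwartzMap.integralCLM ℝ (volume : Measure (ℝ × ℝ × ℝ)) with hintC
  set L0 : SchwartzMap (ℝ × ℝ × ℝ × ℝ) ℂ →L[ℝ] ℂ := intC.comp (mulG.comp compT) with hL0
  have happ : ∀ (φ : SchwartzMap (ℝ × ℝ × ℝ × ℝ) ℂ) (p : ℝ × ℝ × ℝ),
      (mulG (compT φ)) p = φ (p.1, p.1 + p.2.1, p.2.1, p.2.2) * g p := fun φ p => rfl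
  have key : ∀ φ : SchwartzMap (ℝ × ℝ × ℝ × ℝ) ℂ,
      L0 φ = ∫ p : ℝ × ℝ × ℝ, φ (p.1, p.1 + p.2.1, p.2.1, p.2.2) * g p := by
    intro φ
    rw [hL0, ContinuousLinearMap.comp_apply, ContinuousLinearMap.comp_apply, hintC,
      SchwartzMap.integralCLM_apply]
    exact integral_congr_ae (Filter.Eventually.of_forall (happ φ))
  have hfun : ∀ φ : SchwartzMap (ℝ × ℝ × ℝ × ℝ) ℂ,
      (fun p : ℝ × ℝ × ℝ =>
        f (p.2.2 - p.2.1) *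
          Complex.exp (2 * Real.pi * Complex.I * (p.1 : ℂ) * ((p.2.2 : ℂ) - (p.2.1 : ℂ))) *
          φ (p.1, p.1 + p.2.1, p.2.1, p.2.2))
      = fun p => φ (p.1, p.1 + p.2.1, p.2.1, p.2.2) * g p := by
    intro φ; funext p; simp only [hgdef]; ring
  constructor
  · intro φ
    rw [hfun φ]
    exact ((mulG (compT φ)).integrable (μ := volume)).congr
      (Filter.Eventually.of_forall (happ φ))
  · have hsmul : ∀ (c : ℂ) (φ : SchwartzMap (ℝ × ℝ × ℝ × ℝ) ℂ), L0 (c • φ) = c * L0 φ := by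
      intro c φ
      rw [key, key]
      rw [← integral_const_mul]
      congr 1
      funext p
      simp only [SchwartzMap.smul_apply, smul_eq_mul]
      ring
    refine ⟨⟨{ toFun := fun φ => L0 φ
               map_add' := fun φ ψ => map_add L0 φ ψ
               map_smul' := fun c φ => by simpa using hsmul c φ }, L0.cont⟩, fun φ => ?_⟩
    show L0 φ = _
    rw [key φ, hfun φ]
end
end

section
/- Let b > 0 be a real number and let z be a complex number with |Im z| < (b + b⁻¹)/2. For every δ with 0 < δ < π·min(b, b⁻¹), the integral ∫_ℝ e^{−2iz(t+iδ)} / (4 sinh((t+iδ)b) sinh((t+iδ)/b) (t+iδ)) dt converges absolutely, and its value is independent of the choice of δ in the interval (0, π·min(b, b⁻¹)). -/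
open Complex MeasureTheory Real Filter Set Topology Interval

noncomputable def fQ (b : ℝ) (z : ℂ) (w : ℂ) : ℂ :=
  Complex.exp (-2 * Complex.I * z * w) /
    (4 * Complex.sinh (w * (b : ℂ)) * Complex.sinh (w / (b : ℂ)) * w)

lemma sinh_decomp (x y : ℝ) : Complex.sinh (x + y * I) =
    Real.sinh x * Real.cos y + (Real.cosh x * Real.sin y) * I := by
  rw [Complex.sinh_add, Complex.cosh_mul_I, Complex.sinh_mul_I]
  push_cast; ring

lemma sinh_im' (w : ℂ) : (Complex.sinh w).im = Real.cosh w.re * Real.sin w.im := by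
  have h : Complex.sinh w = Real.sinh w.re * Real.cos w.im
      + (Real.cosh w.re * Real.sin w.im) * I := by
    rw [← sinh_decomp, Complex.re_add_im]
  rw [h]
  simp [Complex.add_im, Complex.mul_im, Complex.ofReal_re, Complex.ofReal_im,
    Complex.sin_ofReal_re, Complex.cos_ofReal_re, Complex.sinh_ofReal_re,
    Complex.cosh_ofReal_re]

lemma sinh_re' (w : ℂ) : (Complex.sinh w).re = Real.sinh w.re * Real.cos w.im := by
  have h : Complex.sinh w = Real.sinh w.re * Real.cos w.im
      + (Real.cosh w.re * Real.sin w.im) * I := by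
    rw [← sinh_decomp, Complex.re_add_im]
  rw [h]
  simp [Complex.add_re, Complex.mul_re, Complex.ofReal_re, Complex.ofReal_im,
    Complex.sin_ofReal_re, Complex.cos_ofReal_re, Complex.sinh_ofReal_re,
    Complex.cosh_ofReal_re]

lemma norm_sinh_ge_im (w : ℂ) :
    Real.cosh w.re * |Real.sin w.im| ≤ ‖Complex.sinh w‖ := by
  have h2 := Complex.abs_im_le_norm (Complex.sinh w)
  rw [sinh_im', abs_mul, abs_of_pos (Real.cosh_pos (x := w.re))] at h2
  exact h2

lemma norm_sinh_ge_re (w : ℂ) :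
    Real.sinh |w.re| ≤ ‖Complex.sinh w‖ := by
  have hsq : (‖Complex.sinh w‖)^2
      = (Real.sinh w.re * Real.cos w.im)^2 + (Real.cosh w.re * Real.sin w.im)^2 := by
    rw [Complex.sq_norm, Complex.normSq_apply, sinh_re', sinh_im']
    ring
  have h : (Real.sinh w.re)^2 ≤ (‖Complex.sinh w‖)^2 := by
    rw [hsq]
    nlinarith [Real.sin_sq_add_cos_sq w.im, Real.cosh_sq w.re, sq_nonneg (Real.sin w.im),
      sq_nonneg (Real.sinh w.re)]
  have := Real.sqrt_le_sqrt h
  rw [Real.sqrt_sq_eq_abs, Real.sqrt_sq (norm_nonneg _)] at this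
  rw [← Real.abs_sinh]
  exact this

lemma sinh_ne_zero_of_sin_pos {w : ℂ} (h : 0 < Real.sin w.im) : Complex.sinh w ≠ 0 := by
  have h2 : 0 < Real.cosh w.re * |Real.sin w.im| :=
    mul_pos (Real.cosh_pos (x := w.re)) (abs_pos.mpr h.ne')
  have h3 := lt_of_lt_of_le h2 (norm_sinh_ge_im w)
  intro hzero
  rw [hzero] at h3
  simp at h3

lemma norm_fQ (b : ℝ) (z w : ℂ) :
    ‖fQ b z w‖ = Real.exp (2 * z.re * w.im + 2 * z.im * w.re) /
      (4 * ‖Complex.sinh (w * (b : ℂ))‖ *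
        ‖Complex.sinh (w / (b : ℂ))‖ * ‖w‖) := by
  unfold fQ
  rw [norm_div, Complex.norm_exp]
  congr 1
  · congr 1
    simp [Complex.mul_re, Complex.mul_im]
  · rw [norm_mul, norm_mul, norm_mul]
    norm_num

lemma strip_sin_pos {b : ℝ} (hb : 0 < b) {y : ℝ} (h0 : 0 < y)
    (h2 : y < Real.pi * min b b⁻¹) :
    0 < Real.sin (y * b) ∧ 0 < Real.sin (y / b) := by
  have hπ := Real.pi_pos
  have hmin1 : min b b⁻¹ ≤ b⁻¹ := min_le_right _ _
  have hmin2 : min b b⁻¹ ≤ b := min_le_left _ _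
  constructor
  · apply Real.sin_pos_of_pos_of_lt_pi (mul_pos h0 hb)
    have : y < Real.pi * b⁻¹ := lt_of_lt_of_le h2 (by nlinarith)
    calc y * b < Real.pi * b⁻¹ * b := by nlinarith
      _ = Real.pi := by field_simp
  · apply Real.sin_pos_of_pos_of_lt_pi (div_pos h0 hb)
    have : y < Real.pi * b := lt_of_lt_of_le h2 (by nlinarith)
    rw [div_lt_iff₀ hb]
    linarith [this]

lemma cosh_mul_cosh_ge (b t : ℝ) (hb : 0 < b) :
    Real.cosh ((b + b⁻¹) * t) ≤ 2 * (Real.cosh (t * b) * Real.cosh (t / b)) := by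
  have key : (b + b⁻¹) * t = t * b + t / b := by field_simp
  rw [key, Real.cosh_add]
  have e1 : Real.cosh (t * b) ^ 2 * Real.cosh (t / b) ^ 2 =
      (Real.sinh (t * b) ^ 2 + 1) * (Real.sinh (t / b) ^ 2 + 1) := by
    rw [Real.cosh_sq, Real.cosh_sq]
  have h1 : Real.sinh (t * b) * Real.sinh (t / b) ≤ Real.cosh (t * b) * Real.cosh (t / b) := by
    nlinarith [e1, mul_pos (Real.cosh_pos (x := t * b)) (Real.cosh_pos (x := t / b)),
      sq_nonneg (Real.sinh (t * b)), sq_nonneg (Real.sinh (t / b)),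
      sq_nonneg (Real.sinh (t * b) * Real.sinh (t / b))]
  linarith

lemma bound_line {b : ℝ} (hb : 0 < b) {δ : ℝ} (h0 : 0 < δ)
    (hs1 : 0 < Real.sin (δ * b)) (hs2 : 0 < Real.sin (δ / b)) (z : ℂ) (t : ℝ) :
    ‖fQ b z ((t : ℂ) + I * (δ : ℂ))‖ ≤
      (Real.exp (2 * z.re * δ) * 2 / (4 * Real.sin (δ * b) * Real.sin (δ / b) * δ)) *
        (Real.exp (2 * z.im * t) / Real.cosh ((b + b⁻¹) * t)) := by
  set w : ℂ := (t : ℂ) + I * (δ : ℂ) with hw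
  have hwre : w.re = t := by simp [hw]
  have hwim : w.im = δ := by simp [hw]
  have hA1 : Real.cosh (t * b) * Real.sin (δ * b) ≤ ‖Complex.sinh (w * (b:ℂ))‖ := by
    have := norm_sinh_ge_im (w * (b:ℂ))
    have hre : (w * (b:ℂ)).re = t * b := by simp [hwre]
    have him : (w * (b:ℂ)).im = δ * b := by simp [hwim]
    rwa [hre, him, abs_of_pos hs1] at this
  have hA2 : Real.cosh (t / b) * Real.sin (δ / b) ≤ ‖Complex.sinh (w / (b:ℂ))‖ := by
    have := norm_sinh_ge_im (w / (b:ℂ))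
    have hre : (w / (b:ℂ)).re = t / b := by
      rw [Complex.div_ofReal_re, hwre]
    have him : (w / (b:ℂ)).im = δ / b := by
      rw [Complex.div_ofReal_im, hwim]
    rwa [hre, him, abs_of_pos hs2] at this
  have hA3 : δ ≤ ‖w‖ := by
    have := Complex.abs_im_le_norm w
    rwa [hwim, abs_of_pos h0] at this
  have hcc := cosh_mul_cosh_ge b t hb
  have hc1 := Real.cosh_pos (t * b)
  have hc2 := Real.cosh_pos (t / b)
  have hC := Real.cosh_pos ((b + b⁻¹) * t)
  have hD0pos : 0 < 4 * Real.sin (δ * b) * Real.sin (δ / b) * δ / 2 *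
      Real.cosh ((b + b⁻¹) * t) := by positivity
  have hDge : 4 * Real.sin (δ * b) * Real.sin (δ / b) * δ / 2 * Real.cosh ((b + b⁻¹) * t) ≤
      4 * ‖Complex.sinh (w * (b:ℂ))‖ * ‖Complex.sinh (w / (b:ℂ))‖ *
        ‖w‖ := by
    have step1 : 4 * Real.sin (δ * b) * Real.sin (δ / b) * δ / 2 * Real.cosh ((b + b⁻¹) * t)
        ≤ 4 * (Real.cosh (t * b) * Real.sin (δ * b)) * (Real.cosh (t / b) * Real.sin (δ / b)) * δ := by
      nlinarith [mul_pos hs1 hs2, mul_pos (mul_pos hs1 hs2) h0]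
    refine le_trans step1 ?_
    gcongr <;> first
      | positivity
      | exact hA1
      | exact hA2
      | exact hA3
  rw [norm_fQ, hwre, hwim]
  calc Real.exp (2 * z.re * δ + 2 * z.im * t) /
        (4 * ‖Complex.sinh (w * (b:ℂ))‖ * ‖Complex.sinh (w / (b:ℂ))‖ *
          ‖w‖)
      ≤ Real.exp (2 * z.re * δ + 2 * z.im * t) /
        (4 * Real.sin (δ * b) * Real.sin (δ / b) * δ / 2 * Real.cosh ((b + b⁻¹) * t)) := by
        apply div_le_div_of_nonneg_left (Real.exp_pos _).le hD0pos hDge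
    _ = (Real.exp (2 * z.re * δ) * 2 / (4 * Real.sin (δ * b) * Real.sin (δ / b) * δ)) *
        (Real.exp (2 * z.im * t) / Real.cosh ((b + b⁻¹) * t)) := by
        rw [Real.exp_add]
        field_simp
        try ring

lemma integrable_exp_neg_abs' {a : ℝ} (ha : 0 < a) :
    Integrable fun t : ℝ => Real.exp (-a * |t|) := by
  have hIoi : IntegrableOn (fun t : ℝ => Real.exp (-a * |t|)) (Set.Ioi 0) := by
    apply ((exp_neg_integrableOn_Ioi 0 ha)).congr_fun ?_ measurableSet_Ioi
    intro x hx
    show Real.exp (-a * x) = Real.exp (-a * |x|)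
    rw [abs_of_pos hx]
  rw [← integrableOn_univ, ← @Set.Iio_union_Ici _ _ (0 : ℝ), integrableOn_union,
    integrableOn_Ici_iff_integrableOn_Ioi]
  refine ⟨?_, hIoi⟩
  rw [← (Measure.measurePreserving_neg (volume : Measure ℝ)).integrableOn_comp_preimage
      (Homeomorph.neg ℝ).measurableEmbedding]
  simp only [Function.comp_def, abs_neg, Set.neg_preimage, Set.neg_Iio, neg_zero]
  exact hIoi

lemma integrable_exp_div_cosh {c d : ℝ} (h : |c| < d) :
    Integrable fun t : ℝ => Real.exp (c * t) / Real.cosh (d * t) := by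
  have hd : 0 < d := lt_of_le_of_lt (abs_nonneg c) h
  apply Integrable.mono' ((integrable_exp_neg_abs' (a := d - |c|) (by linarith)).const_mul 2)
  · apply Continuous.aestronglyMeasurable
    exact (Real.continuous_exp.comp (continuous_const.mul continuous_id)).div
      (Real.continuous_cosh.comp (continuous_const.mul continuous_id))
      (fun t => (Real.cosh_pos (x := d * t)).ne')
  · refine ae_of_all _ fun t => ?_
    rw [Real.norm_eq_abs, abs_of_pos (by positivity), div_le_iff₀ (Real.cosh_pos (x := d * t))]
    have h2 : Real.exp (d * |t|) ≤ 2 * Real.cosh (d * t) := by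
      rw [Real.cosh_eq]
      rcases le_total 0 t with h' | h'
      · rw [_root_.abs_of_nonneg h']
        linarith [Real.exp_pos (-(d * t))]
      · rw [_root_.abs_of_nonpos h']
        have heq : d * -t = -(d * t) := by ring
        rw [heq]
        linarith [Real.exp_pos (d * t)]
    calc Real.exp (c * t) ≤ Real.exp (|c| * |t|) := by
          apply Real.exp_le_exp.2
          calc c * t ≤ |c * t| := le_abs_self _
            _ = |c| * |t| := abs_mul c t
      _ = Real.exp (-(d - |c|) * |t|) * Real.exp (d * |t|) := by
          rw [← Real.exp_add]; ring_nf
      _ ≤ Real.exp (-(d - |c|) * |t|) * (2 * Real.cosh (d * t)) := by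
          exact mul_le_mul_of_nonneg_left h2 (Real.exp_pos _).le
      _ = 2 * Real.exp (-(d - |c|) * |t|) * Real.cosh (d * t) := by ring

lemma fQ_denom_ne {b : ℝ} (hb : 0 < b) {w : ℂ} (h0 : 0 < w.im)
    (hlt : w.im < Real.pi * min b b⁻¹) :
    4 * Complex.sinh (w * (b : ℂ)) * Complex.sinh (w / (b : ℂ)) * w ≠ 0 := by
  obtain ⟨hs1, hs2⟩ := strip_sin_pos hb h0 hlt
  have h1 : Complex.sinh (w * (b : ℂ)) ≠ 0 := by
    apply sinh_ne_zero_of_sin_pos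
    have : (w * (b : ℂ)).im = w.im * b := by simp
    rw [this]; exact hs1
  have h2 : Complex.sinh (w / (b : ℂ)) ≠ 0 := by
    apply sinh_ne_zero_of_sin_pos
    rw [Complex.div_ofReal_im]
    exact hs2
  have h3 : w ≠ 0 := by
    intro hw
    rw [hw] at h0
    simp at h0
  exact mul_ne_zero (mul_ne_zero (mul_ne_zero (by norm_num) h1) h2) h3

lemma continuous_fQ_line {b : ℝ} (hb : 0 < b) (z : ℂ) {δ : ℝ} (h0 : 0 < δ)
    (hlt : δ < Real.pi * min b b⁻¹) :
    Continuous fun t : ℝ => fQ b z ((t : ℂ) + I * (δ : ℂ)) := by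
  unfold fQ
  apply Continuous.div
  · fun_prop
  · fun_prop
  · intro t
    apply fQ_denom_ne hb
    · simp [h0]
    · simp [hlt]

lemma integrable_line {b : ℝ} (hb : 0 < b) {z : ℂ} (hz : |z.im| < (b + b⁻¹) / 2)
    {δ : ℝ} (h0 : 0 < δ) (hlt : δ < Real.pi * min b b⁻¹) :
    Integrable fun t : ℝ => fQ b z ((t : ℂ) + I * (δ : ℂ)) := by
  obtain ⟨hs1, hs2⟩ := strip_sin_pos hb h0 hlt
  have hc : |2 * z.im| < b + b⁻¹ := by
    rw [abs_mul]
    rw [abs_of_pos (by norm_num : (0:ℝ) < 2)]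
    linarith [hz]
  apply Integrable.mono'
    ((integrable_exp_div_cosh hc).const_mul
      (Real.exp (2 * z.re * δ) * 2 / (4 * Real.sin (δ * b) * Real.sin (δ / b) * δ)))
    (continuous_fQ_line hb z h0 hlt).aestronglyMeasurable
  refine ae_of_all _ fun t => ?_
  have := bound_line hb h0 hs1 hs2 z t
  calc ‖fQ b z ((t : ℂ) + I * (δ : ℂ))‖
      ≤ (Real.exp (2 * z.re * δ) * 2 / (4 * Real.sin (δ * b) * Real.sin (δ / b) * δ)) *
        (Real.exp (2 * z.im * t) / Real.cosh ((b + b⁻¹) * t)) := this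
    _ = Real.exp (2 * z.re * δ) * 2 / (4 * Real.sin (δ * b) * Real.sin (δ / b) * δ) *
        (Real.exp (2 * z.im * t) / Real.cosh ((b + b⁻¹) * t)) := rfl

lemma bound_vert {b : ℝ} (hb : 0 < b) (z : ℂ) {R s y D : ℝ} (hR : 0 < R) (hsR : |s| = R)
    (hy0 : 0 < y) (hyD : y ≤ D) :
    ‖fQ b z ((s : ℂ) + I * (y : ℂ))‖ ≤
      Real.exp (2 * |z.re| * D) * Real.exp (2 * |z.im| * R) /
        (4 * Real.sinh (R * b) * Real.sinh (R / b) * R) := by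
  set w : ℂ := (s : ℂ) + I * (y : ℂ) with hw
  have hwre : w.re = s := by simp [hw]
  have hwim : w.im = y := by simp [hw]
  have hA1 : Real.sinh (R * b) ≤ ‖Complex.sinh (w * (b:ℂ))‖ := by
    have := norm_sinh_ge_re (w * (b:ℂ))
    have hre : (w * (b:ℂ)).re = s * b := by simp [hwre]
    rw [hre, abs_mul, hsR, abs_of_pos hb] at this
    exact this
  have hA2 : Real.sinh (R / b) ≤ ‖Complex.sinh (w / (b:ℂ))‖ := by
    have := norm_sinh_ge_re (w / (b:ℂ))
    have hre : (w / (b:ℂ)).re = s / b := by rw [Complex.div_ofReal_re, hwre]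
    rw [hre, abs_div, hsR, abs_of_pos hb] at this
    exact this
  have hA3 : R ≤ ‖w‖ := by
    have := Complex.abs_re_le_norm w
    rwa [hwre, hsR] at this
  have hsinh1 : 0 < Real.sinh (R * b) := Real.sinh_pos_iff.mpr (mul_pos hR hb)
  have hsinh2 : 0 < Real.sinh (R / b) := Real.sinh_pos_iff.mpr (div_pos hR hb)
  rw [norm_fQ, hwre, hwim]
  apply div_le_div₀ (by positivity)
  · rw [← Real.exp_add]
    apply Real.exp_le_exp.2
    have e1 : z.re * y ≤ |z.re| * D :=
      le_trans (mul_le_mul_of_nonneg_right (le_abs_self _) hy0.le)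
        (mul_le_mul_of_nonneg_left hyD (abs_nonneg _))
    have e2 : z.im * s ≤ |z.im| * R := by
      calc z.im * s ≤ |z.im * s| := le_abs_self _
        _ = |z.im| * |s| := abs_mul _ _
        _ = |z.im| * R := by rw [hsR]
    linarith
  · positivity
  · gcongr <;> positivity

lemma sinh_lb {x : ℝ} (hx : 1 ≤ x) : Real.exp x / 4 ≤ Real.sinh x := by
  rw [Real.sinh_eq]
  have h1 : Real.exp (-x) ≤ 1 := by
    calc Real.exp (-x) ≤ Real.exp 0 := Real.exp_le_exp.2 (by linarith)
      _ = 1 := Real.exp_zero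
  have h2 : 2 ≤ Real.exp x := by
    have ha := Real.add_one_le_exp 1
    have hb2 := Real.exp_le_exp.2 hx
    linarith
  linarith

lemma tendsto_vert {b : ℝ} (hb : 0 < b) (z : ℂ) (hz : |z.im| < (b + b⁻¹) / 2) :
    Tendsto (fun R : ℝ => Real.exp (2 * |z.im| * R) /
      (4 * Real.sinh (R * b) * Real.sinh (R / b) * R)) atTop (𝓝 0) := by
  set a := 2 * |z.im| with ha
  set d := b + b⁻¹ with hd
  have had : a < d := by rw [ha, hd]; linarith [hz]
  have hev : ∀ᶠ R : ℝ in atTop, 1 ≤ R ∧ 1 ≤ R * b ∧ 1 ≤ R / b := by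
    filter_upwards [eventually_ge_atTop (1:ℝ), eventually_ge_atTop b⁻¹,
      eventually_ge_atTop b] with R h1 h2 h3
    refine ⟨h1, ?_, ?_⟩
    · calc (1:ℝ) = b⁻¹ * b := by field_simp
        _ ≤ R * b := by gcongr
    · rw [le_div_iff₀ hb]; linarith
  apply squeeze_zero' (g := fun R => 4 * Real.exp (-((d - a) * R)))
  · filter_upwards [hev] with R ⟨h1, h2, h3⟩
    have hR : 0 < R := lt_of_lt_of_le one_pos h1
    have hs1 : 0 < Real.sinh (R * b) := Real.sinh_pos_iff.mpr (mul_pos hR hb)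
    have hs2 : 0 < Real.sinh (R / b) := Real.sinh_pos_iff.mpr (div_pos hR hb)
    positivity
  · filter_upwards [hev] with R ⟨h1, h2, h3⟩
    have hR : 0 < R := lt_of_lt_of_le one_pos h1
    have hs1 := sinh_lb h2
    have hs2 := sinh_lb h3
    have hsp1 : 0 < Real.sinh (R * b) := Real.sinh_pos_iff.mpr (mul_pos hR hb)
    have hsp2 : 0 < Real.sinh (R / b) := Real.sinh_pos_iff.mpr (div_pos hR hb)
    have e : Real.exp (d * R) = Real.exp (R * b) * Real.exp (R / b) := by
      rw [← Real.exp_add]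
      congr 1
      rw [hd]; field_simp
    have hden : Real.exp (d * R) / 4 ≤ 4 * Real.sinh (R * b) * Real.sinh (R / b) * R := by
      calc Real.exp (d * R) / 4 = 4 * (Real.exp (R * b) / 4) * (Real.exp (R / b) / 4) * 1 := by
            rw [e]; ring
        _ ≤ 4 * Real.sinh (R * b) * Real.sinh (R / b) * R := by gcongr <;> positivity
    calc Real.exp (a * R) / (4 * Real.sinh (R * b) * Real.sinh (R / b) * R)
        ≤ Real.exp (a * R) / (Real.exp (d * R) / 4) :=
          div_le_div_of_nonneg_left (Real.exp_pos _).le (by positivity) hden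
      _ = 4 * Real.exp (-((d - a) * R)) := by
          rw [show -((d - a) * R) = a * R - d * R by ring, Real.exp_sub]
          field_simp
  · have h1 : Tendsto (fun R : ℝ => (d - a) * R) atTop atTop :=
      Tendsto.const_mul_atTop (by linarith) tendsto_id
    have h2 := Real.tendsto_exp_neg_atTop_nhds_zero.comp h1
    have h3 := h2.const_mul (4:ℝ)
    simpa using h3

lemma diff_fQ {b : ℝ} (hb : 0 < b) (z : ℂ) {w : ℂ} (h0 : 0 < w.im)
    (hlt : w.im < Real.pi * min b b⁻¹) : DifferentiableAt ℂ (fQ b z) w := by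
  unfold fQ
  exact DifferentiableAt.div (by fun_prop) (by fun_prop) (fQ_denom_ne hb h0 hlt)

lemma rect_zero {b : ℝ} (hb : 0 < b) (z : ℂ) {δ₁ δ₂ : ℝ} (h10 : 0 < δ₁)
    (h2lt : δ₂ < Real.pi * min b b⁻¹) (hle : δ₁ ≤ δ₂) {R : ℝ} :
    (∫ x in (-R)..R, fQ b z ((x : ℂ) + I * (δ₁ : ℂ))) -
      (∫ x in (-R)..R, fQ b z ((x : ℂ) + I * (δ₂ : ℂ))) +
      I • (∫ y in δ₁..δ₂, fQ b z ((R : ℂ) + I * (y : ℂ))) -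
      I • (∫ y in δ₁..δ₂, fQ b z (((-R : ℝ) : ℂ) + I * (y : ℂ))) = 0 := by
  have hre1 : (((-R : ℝ) : ℂ) + (δ₁ : ℂ) * I).re = -R := by simp
  have him1 : (((-R : ℝ) : ℂ) + (δ₁ : ℂ) * I).im = δ₁ := by simp
  have hre2 : (((R : ℝ) : ℂ) + (δ₂ : ℂ) * I).re = R := by simp
  have him2 : (((R : ℝ) : ℂ) + (δ₂ : ℂ) * I).im = δ₂ := by simp
  have H : DifferentiableOn ℂ (fQ b z)
      ([[(((-R : ℝ) : ℂ) + (δ₁ : ℂ) * I).re, (((R : ℝ) : ℂ) + (δ₂ : ℂ) * I).re]] ×ℂ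
        [[(((-R : ℝ) : ℂ) + (δ₁ : ℂ) * I).im, (((R : ℝ) : ℂ) + (δ₂ : ℂ) * I).im]]) := by
    rw [hre1, him1, hre2, him2]
    intro w hw
    rw [Complex.mem_reProdIm] at hw
    have him : w.im ∈ Icc δ₁ δ₂ := by
      rw [Set.uIcc_of_le hle] at hw
      exact hw.2
    exact (diff_fQ hb z (lt_of_lt_of_le h10 him.1)
      (lt_of_le_of_lt him.2 h2lt)).differentiableWithinAt
  have key := integral_boundary_rect_eq_zero_of_differentiableOn (fQ b z)
    (((-R : ℝ) : ℂ) + (δ₁ : ℂ) * I) (((R : ℝ) : ℂ) + (δ₂ : ℂ) * I) H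
  rw [hre1, him1, hre2, him2] at key
  have hsw : ∀ (x y : ℝ), (x : ℂ) + (y : ℂ) * I = (x : ℂ) + I * (y : ℂ) := fun x y => by ring
  simp only [hsw] at key
  exact key

lemma shift_eq {b : ℝ} (hb : 0 < b) {z : ℂ} (hz : |z.im| < (b + b⁻¹) / 2)
    {δ₁ δ₂ : ℝ} (h10 : 0 < δ₁) (h1lt : δ₁ < Real.pi * min b b⁻¹)
    (h20 : 0 < δ₂) (h2lt : δ₂ < Real.pi * min b b⁻¹) (hle : δ₁ ≤ δ₂) :
    (∫ t : ℝ, fQ b z ((t : ℂ) + I * (δ₁ : ℂ))) =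
      ∫ t : ℝ, fQ b z ((t : ℂ) + I * (δ₂ : ℂ)) := by
  have int1 := integrable_line hb hz h10 h1lt
  have int2 := integrable_line hb hz h20 h2lt
  -- horizontal limits
  have hlim1 : Tendsto (fun R : ℝ => ∫ x in (-R)..R, fQ b z ((x : ℂ) + I * (δ₁ : ℂ)))
      atTop (𝓝 (∫ t : ℝ, fQ b z ((t : ℂ) + I * (δ₁ : ℂ)))) :=
    intervalIntegral_tendsto_integral int1 tendsto_neg_atTop_atBot tendsto_id
  have hlim2 : Tendsto (fun R : ℝ => ∫ x in (-R)..R, fQ b z ((x : ℂ) + I * (δ₂ : ℂ)))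
      atTop (𝓝 (∫ t : ℝ, fQ b z ((t : ℂ) + I * (δ₂ : ℂ)))) :=
    intervalIntegral_tendsto_integral int2 tendsto_neg_atTop_atBot tendsto_id
  -- vertical limits
  have hvb := tendsto_vert hb z hz
  have hCvb : Tendsto (fun R : ℝ => Real.exp (2 * |z.re| * δ₂) * |δ₂ - δ₁| *
      (Real.exp (2 * |z.im| * R) / (4 * Real.sinh (R * b) * Real.sinh (R / b) * R)))
      atTop (𝓝 0) := by
    have := hvb.const_mul (Real.exp (2 * |z.re| * δ₂) * |δ₂ - δ₁|)
    simpa using this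
  have hvert : ∀ s : ℝ → ℝ, (∀ R : ℝ, 0 < R → |s R| = R) →
      Tendsto (fun R : ℝ => ∫ y in δ₁..δ₂, fQ b z (((s R : ℝ) : ℂ) + I * (y : ℂ)))
        atTop (𝓝 0) := by
    intro s hs
    apply squeeze_zero_norm' (a := fun R : ℝ => Real.exp (2 * |z.re| * δ₂) * |δ₂ - δ₁| *
      (Real.exp (2 * |z.im| * R) / (4 * Real.sinh (R * b) * Real.sinh (R / b) * R)))
    · filter_upwards [eventually_gt_atTop (0:ℝ)] with R hR
      have hb1 : ∀ y ∈ Set.uIoc δ₁ δ₂,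
          ‖fQ b z (((s R : ℝ) : ℂ) + I * (y : ℂ))‖ ≤
            Real.exp (2 * |z.re| * δ₂) * Real.exp (2 * |z.im| * R) /
              (4 * Real.sinh (R * b) * Real.sinh (R / b) * R) := by
        intro y hy
        rw [Set.uIoc_of_le hle] at hy
        exact bound_vert hb z hR (hs R hR) (lt_trans h10 hy.1) hy.2
      have := intervalIntegral.norm_integral_le_of_norm_le_const hb1
      calc ‖∫ y in δ₁..δ₂, fQ b z (((s R : ℝ) : ℂ) + I * (y : ℂ))‖
          ≤ Real.exp (2 * |z.re| * δ₂) * Real.exp (2 * |z.im| * R) /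
              (4 * Real.sinh (R * b) * Real.sinh (R / b) * R) * |δ₂ - δ₁| := this
        _ = Real.exp (2 * |z.re| * δ₂) * |δ₂ - δ₁| *
            (Real.exp (2 * |z.im| * R) / (4 * Real.sinh (R * b) * Real.sinh (R / b) * R)) := by
            ring
    · exact hCvb
  have hvert1 := hvert (fun R => R) (fun R hR => abs_of_pos hR)
  have hvert2 := hvert (fun R => -R) (fun R hR => by rw [abs_neg, abs_of_pos hR])
  have hcomb : Tendsto (fun R : ℝ =>
      (∫ x in (-R)..R, fQ b z ((x : ℂ) + I * (δ₁ : ℂ))) -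
        (∫ x in (-R)..R, fQ b z ((x : ℂ) + I * (δ₂ : ℂ))) +
        I • (∫ y in δ₁..δ₂, fQ b z ((R : ℂ) + I * (y : ℂ))) -
        I • (∫ y in δ₁..δ₂, fQ b z (((-R : ℝ) : ℂ) + I * (y : ℂ)))) atTop
      (𝓝 ((∫ t : ℝ, fQ b z ((t : ℂ) + I * (δ₁ : ℂ))) -
        (∫ t : ℝ, fQ b z ((t : ℂ) + I * (δ₂ : ℂ))) + I • (0:ℂ) - I • (0:ℂ))) :=
    (((hlim1.sub hlim2).add (hvert1.const_smul I)).sub (hvert2.const_smul I))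
  have hzero : Tendsto (fun _ : ℝ => (0:ℂ)) atTop
      (𝓝 ((∫ t : ℝ, fQ b z ((t : ℂ) + I * (δ₁ : ℂ))) -
        (∫ t : ℝ, fQ b z ((t : ℂ) + I * (δ₂ : ℂ))) + I • (0:ℂ) - I • (0:ℂ))) := by
    apply hcomb.congr
    intro R
    exact rect_zero hb z h10 h2lt hle
  have := tendsto_nhds_unique hzero tendsto_const_nhds
  simp only [smul_zero, add_zero, sub_zero] at this
  exact sub_eq_zero.mp this

/-- Let `b > 0` and `z ∈ ℂ` with `|Im z| < (b + b⁻¹)/2`. For every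
`δ ∈ (0, π·min(b,b⁻¹))` the integrand of Faddeev's quantum dilogarithm along the
contour `ℝ + iδ`, namely
`t ↦ e^{−2iz(t+iδ)} / (4 sinh((t+iδ)b) sinh((t+iδ)/b) (t+iδ))`,
is absolutely integrable over `ℝ`, and the value of the integral does not depend on
the choice of `δ` in that interval. -/
theorem faddeev_contour_integral_well_defined
    (b : ℝ) (hb : 0 < b) (z : ℂ) (hz : |z.im| < (b + b⁻¹) / 2) :
    (∀ δ : ℝ, 0 < δ → δ < Real.pi * min b b⁻¹ →
      Integrable (fun t : ℝ =>
        Complex.exp (-2 * Complex.I * z * ((t : ℂ) + Complex.I * (δ : ℂ))) /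
          (4 * Complex.sinh (((t : ℂ) + Complex.I * (δ : ℂ)) * (b : ℂ)) *
            Complex.sinh (((t : ℂ) + Complex.I * (δ : ℂ)) / (b : ℂ)) *
            ((t : ℂ) + Complex.I * (δ : ℂ))))) ∧
    (∀ δ₁ δ₂ : ℝ, 0 < δ₁ → δ₁ < Real.pi * min b b⁻¹ → 0 < δ₂ → δ₂ < Real.pi * min b b⁻¹ →
      (∫ t : ℝ,
        Complex.exp (-2 * Complex.I * z * ((t : ℂ) + Complex.I * (δ₁ : ℂ))) /
          (4 * Complex.sinh (((t : ℂ) + Complex.I * (δ₁ : ℂ)) * (b : ℂ)) *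
            Complex.sinh (((t : ℂ) + Complex.I * (δ₁ : ℂ)) / (b : ℂ)) *
            ((t : ℂ) + Complex.I * (δ₁ : ℂ)))) =
      ∫ t : ℝ,
        Complex.exp (-2 * Complex.I * z * ((t : ℂ) + Complex.I * (δ₂ : ℂ))) /
          (4 * Complex.sinh (((t : ℂ) + Complex.I * (δ₂ : ℂ)) * (b : ℂ)) *
            Complex.sinh (((t : ℂ) + Complex.I * (δ₂ : ℂ)) / (b : ℂ)) *
            ((t : ℂ) + Complex.I * (δ₂ : ℂ)))) := by
  constructor
  · intro δ h0 hlt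
    exact integrable_line hb hz h0 hlt
  · intro δ₁ δ₂ h10 h1lt h20 h2lt
    rcases le_total δ₁ δ₂ with hle | hle
    · exact shift_eq hb hz h10 h1lt h20 h2lt hle
    · exact (shift_eq hb hz h20 h2lt h10 h1lt hle).symm
end
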